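/- Let L ∈ Σ[∂] be monic of prime order n with nontrivial centralizer Z(L) ≠ C[L]. Then L is algebro-geometric, i.e. the gcd of the orders of nonzero elements of Z(L) equals 1. -/

import Mathlib

open scoped Classical
noncomputable section

variable {R : Type} [Ring R]

/-- Left multiplication by `a` as an additive endomorphism of `R`. -/
def mulOp (a : R) : AddMonoid.End R := AddMonoidHom.mulLeft a

/-- The derivation as an additive endomorphism. -/
def derOp (d : R →+ R) : AddMonoid.End R := d

/-- `d` satisfies the Leibniz rule. -/
def IsDeriv (d : R →+ R) : Prop := ∀ a b : R, d (a * b) = d a * b + a * d b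

/-- Additive group of differential operators of order at most `n`:
sums of terms `a · ∂^i` with `i ≤ n`. -/
def OpLE (d : R →+ R) (n : ℕ) : AddSubgroup (AddMonoid.End R) :=
  AddSubgroup.closure {P | ∃ (a : R) (i : ℕ), i ≤ n ∧ P = mulOp a * derOp d ^ i}

/-- `L` is a differential operator. -/
def IsOp (d : R →+ R) (L : AddMonoid.End R) : Prop := ∃ n, L ∈ OpLE d n

/-- `L` is a differential operator of exact order `n`. -/
def HasOrd (d : R →+ R) (L : AddMonoid.End R) (n : ℕ) : Prop :=
  L ∈ OpLE d n ∧ ∀ k, L ∈ OpLE d k → n ≤ k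

/-- `L` is a monic differential operator of order `n`. -/
def MonicOrd (d : R →+ R) (L : AddMonoid.End R) (n : ℕ) : Prop :=
  HasOrd d L n ∧ L - derOp d ^ n ∈ OpLE d (n - 1)

/-- The centralizer of `L` in the ring of differential operators. -/
def Cent (d : R →+ R) (L : AddMonoid.End R) : Set (AddMonoid.End R) :=
  {A | IsOp d A ∧ L * A = A * L}

/-- Polynomials in `L` with constant coefficients. -/
def CPoly (d : R →+ R) (L : AddMonoid.End R) : Set (AddMonoid.End R) :=
  {P | ∃ p : Polynomial R, (∀ k, d (p.coeff k) = 0) ∧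
      P = ∑ i ∈ Finset.range (p.natDegree + 1), mulOp (p.coeff i) * L ^ i}

/-- The level of `L`: smallest order of an element of `Z(L) \ C[L]`. -/
def Level (d : R →+ R) (L : AddMonoid.End R) (M : ℕ) : Prop :=
  (∃ Q ∈ Cent d L, Q ∉ CPoly d L ∧ HasOrd d Q M) ∧
  ∀ Q ∈ Cent d L, Q ∉ CPoly d L → ∀ q, HasOrd d Q q → M ≤ q

/-!
Since `ord L = n` is prime, a common divisor of all orders in `Z(L)` is `1` or `n`. Suppose every
nonzero `Q ∈ Z(L)` has order `n k`. The top term of `[L, Q] = 0` is `n a' ∂ ^ (n k + n - 1)`, where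
`a` is the leading coefficient of `Q`; as the monomials `b ∂ ^ i` are independent in
characteristic zero (commute with a nonconstant `x` to lower the order), `a' = 0`. Then
`Q - a L ^ k ∈ Z(L)` has order `< n k`, hence `≤ n (k - 1)`, and induction on `k` puts `Z(L)` inside
`C[L]`, contradicting `Z(L) ≠ C[L]`.
-/

section Ring

variable {d : R →+ R}

lemma toAddMonoidEnd_self (a : R) : Module.toAddMonoidEnd R R a = mulOp a := rfl

lemma mulOp_add (a b : R) : mulOp (a + b) = mulOp a + mulOp b :=
  map_add (Module.toAddMonoidEnd R R) a b

lemma mulOp_mul (a b : R) : mulOp (a * b) = mulOp a * mulOp b :=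
  map_mul (Module.toAddMonoidEnd R R) a b

lemma mulOp_zero : mulOp (0 : R) = 0 := map_zero (Module.toAddMonoidEnd R R)

lemma mulOp_one : mulOp (1 : R) = 1 := map_one (Module.toAddMonoidEnd R R)

lemma mulOp_natCast_mul (k : ℕ) (a : R) : mulOp ((k : R) * a) = k • mulOp a := by
  rw [← toAddMonoidEnd_self, map_mul, map_natCast, nsmul_eq_mul, toAddMonoidEnd_self]

lemma mulOp_injective : Function.Injective (mulOp : R → AddMonoid.End R) := fun a b h => by
  have h1 : a * 1 = b * 1 := congrArg (fun P : AddMonoid.End R => P 1) h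
  simpa using h1

lemma derOp_mul_mulOp (hd : IsDeriv d) (b : R) :
    derOp d * mulOp b = mulOp b * derOp d + mulOp (d b) :=
  AddMonoidHom.ext fun x => by
    show d (b * x) = b * d x + d b * x
    rw [hd, add_comm]

lemma derPow_mul_mulOp_of_deriv_eq_zero (hd : IsDeriv d) {c : R} (hc : d c = 0) (r : ℕ) :
    derOp d ^ r * mulOp c = mulOp c * derOp d ^ r := by
  induction r with
  | zero => rw [pow_zero, one_mul, mul_one]
  | succ r ih =>
    rw [pow_succ', mul_assoc, ih, ← mul_assoc, derOp_mul_mulOp hd, hc, mulOp_zero, add_zero,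
      mul_assoc]

lemma OpLE_le_iff {n : ℕ} {S : AddSubgroup (AddMonoid.End R)} :
    OpLE d n ≤ S ↔ ∀ (a : R) (i : ℕ), i ≤ n → mulOp a * derOp d ^ i ∈ S := by
  rw [OpLE, AddSubgroup.closure_le]
  exact ⟨fun h a i hi => h ⟨a, i, hi, rfl⟩, fun h _ ⟨a, i, hi, hP⟩ => hP ▸ h a i hi⟩

lemma mulOp_mul_derPow_mem_OpLE {n i : ℕ} (a : R) (hi : i ≤ n) :
    mulOp a * derOp d ^ i ∈ OpLE d n :=
  AddSubgroup.subset_closure ⟨a, i, hi, rfl⟩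

lemma mulOp_mem_OpLE (a : R) (n : ℕ) : mulOp a ∈ OpLE d n := by
  simpa using mulOp_mul_derPow_mem_OpLE (d := d) a (Nat.zero_le n)

lemma derPow_mem_OpLE (n : ℕ) : derOp d ^ n ∈ OpLE d n := by
  simpa [mulOp_one] using mulOp_mul_derPow_mem_OpLE (d := d) (1 : R) le_rfl

lemma OpLE_mono {m n : ℕ} (h : m ≤ n) : OpLE d m ≤ OpLE d n :=
  OpLE_le_iff.2 fun a _ hi => mulOp_mul_derPow_mem_OpLE a (hi.trans h)

lemma mem_OpLE_zero_iff {P : AddMonoid.End R} : P ∈ OpLE d 0 ↔ ∃ a, mulOp a = P := by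
  refine ⟨fun hP => ?_, fun ⟨a, hP⟩ => hP ▸ mulOp_mem_OpLE a 0⟩
  refine (OpLE_le_iff (S := (Module.toAddMonoidEnd R R).toAddMonoidHom.range).2
    (fun a i hi => ⟨a, ?_⟩) hP)
  rw [Nat.le_zero.1 hi, pow_zero, mul_one]
  rfl

lemma exists_sub_mulOp_mul_derPow_mem_OpLE {m : ℕ} {P : AddMonoid.End R}
    (hP : P ∈ OpLE d (m + 1)) : ∃ a, P - mulOp a * derOp d ^ (m + 1) ∈ OpLE d m := by
  let top := (AddMonoidHom.mulRight (derOp d ^ (m + 1))).comp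
    (Module.toAddMonoidEnd R R).toAddMonoidHom
  have hle : OpLE d (m + 1) ≤ top.range ⊔ OpLE d m := OpLE_le_iff.2 fun a i hi => by
    rcases hi.lt_or_eq with hi | rfl
    · exact AddSubgroup.mem_sup_right (mulOp_mul_derPow_mem_OpLE a (Nat.lt_succ_iff.1 hi))
    · exact AddSubgroup.mem_sup_left ⟨a, rfl⟩
  obtain ⟨_, ⟨a, rfl⟩, T, hT, hP⟩ := AddSubgroup.mem_sup.1 (hle hP)
  change mulOp a * derOp d ^ (m + 1) + T = P at hP
  exact ⟨a, by rwa [← hP, add_sub_cancel_left]⟩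

lemma mulOp_mul_mem_OpLE {n : ℕ} (a : R) {P : AddMonoid.End R} (hP : P ∈ OpLE d n) :
    mulOp a * P ∈ OpLE d n :=
  (OpLE_le_iff (S := (OpLE d n).comap (AddMonoidHom.mulLeft (mulOp a)))).2 (fun b i hi => by
    show mulOp a * (mulOp b * derOp d ^ i) ∈ OpLE d n
    rw [← mul_assoc, ← mulOp_mul]
    exact mulOp_mul_derPow_mem_OpLE _ hi) hP

lemma mul_derPow_mem_OpLE {n : ℕ} (l : ℕ) {P : AddMonoid.End R} (hP : P ∈ OpLE d n) :
    P * derOp d ^ l ∈ OpLE d (n + l) :=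
  (OpLE_le_iff (S := (OpLE d (n + l)).comap (AddMonoidHom.mulRight (derOp d ^ l)))).2
    (fun b i hi => by
      show mulOp b * derOp d ^ i * derOp d ^ l ∈ OpLE d (n + l)
      rw [mul_assoc, ← pow_add]
      exact mulOp_mul_derPow_mem_OpLE _ (by omega)) hP

lemma derOp_mul_mem_OpLE (hd : IsDeriv d) {n : ℕ} {P : AddMonoid.End R} (hP : P ∈ OpLE d n) :
    derOp d * P ∈ OpLE d (n + 1) :=
  (OpLE_le_iff (S := (OpLE d (n + 1)).comap (AddMonoidHom.mulLeft (derOp d)))).2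
    (fun b i hi => by
      show derOp d * (mulOp b * derOp d ^ i) ∈ OpLE d (n + 1)
      rw [← mul_assoc, derOp_mul_mulOp hd, add_mul, mul_assoc, ← pow_succ']
      exact add_mem (mulOp_mul_derPow_mem_OpLE _ (by omega))
        (mulOp_mul_derPow_mem_OpLE _ (by omega))) hP

lemma derPow_mul_mem_OpLE (hd : IsDeriv d) {n : ℕ} (l : ℕ) {P : AddMonoid.End R}
    (hP : P ∈ OpLE d n) : derOp d ^ l * P ∈ OpLE d (l + n) := by
  induction l with
  | zero => simpa using hP
  | succ l ih =>
    rw [pow_succ', mul_assoc, add_right_comm]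
    exact derOp_mul_mem_OpLE hd ih

lemma mul_mem_OpLE (hd : IsDeriv d) {m n : ℕ} {P Q : AddMonoid.End R}
    (hP : P ∈ OpLE d m) (hQ : Q ∈ OpLE d n) : P * Q ∈ OpLE d (m + n) :=
  (OpLE_le_iff (S := (OpLE d (m + n)).comap (AddMonoidHom.mulRight Q))).2 (fun b i hi => by
    show mulOp b * derOp d ^ i * Q ∈ OpLE d (m + n)
    rw [mul_assoc]
    exact mulOp_mul_mem_OpLE b (OpLE_mono (by omega) (derPow_mul_mem_OpLE hd i hQ))) hP

lemma pow_mem_OpLE (hd : IsDeriv d) {n : ℕ} {P : AddMonoid.End R} (hP : P ∈ OpLE d n) (k : ℕ) :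
    P ^ k ∈ OpLE d (n * k) := by
  induction k with
  | zero => simpa [mulOp_one] using mulOp_mem_OpLE (d := d) (1 : R) 0
  | succ k ih =>
    rw [pow_succ, mul_add_one]
    exact mul_mem_OpLE hd ih hP

lemma mem_OpLE_of_sub_derPow_mem {n : ℕ} {P : AddMonoid.End R}
    (hP : P - derOp d ^ n ∈ OpLE d (n - 1)) : P ∈ OpLE d n := by
  simpa using add_mem (OpLE_mono (Nat.sub_le n 1) hP) (derPow_mem_OpLE n)

lemma pow_succ_sub_derPow_mem (hd : IsDeriv d) {n : ℕ} {P : AddMonoid.End R}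
    (hP : P - derOp d ^ n ∈ OpLE d (n - 1)) (k : ℕ) :
    P ^ (k + 1) - derOp d ^ (n * (k + 1)) ∈ OpLE d (n * (k + 1) - 1) := by
  induction k with
  | zero => simpa using hP
  | succ k ih =>
    have hnk : n * (k + 1 + 1) = n * (k + 1) + n := mul_add_one n (k + 1)
    have hn : n ≤ n * (k + 1) := Nat.le_mul_of_pos_right n (Nat.succ_pos k)
    have hn0 : n = 0 ∧ n * (k + 1) = 0 ∨ 1 ≤ n := by rcases n with _ | n <;> simp
    have split : P ^ (k + 1 + 1) - derOp d ^ (n * (k + 1 + 1))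
        = P ^ (k + 1) * (P - derOp d ^ n)
          + (P ^ (k + 1) - derOp d ^ (n * (k + 1))) * derOp d ^ n := by
      rw [mul_sub, sub_mul, ← pow_succ, ← pow_add, hnk]
      abel
    rw [split]
    have hPn := mem_OpLE_of_sub_derPow_mem hP
    refine add_mem (OpLE_mono ?_ (mul_mem_OpLE hd (pow_mem_OpLE hd hPn (k + 1)) hP))
      (OpLE_mono ?_ (mul_derPow_mem_OpLE n ih))
    all_goals omega

end Ring

section Commutator

variable {d : R →+ R}

lemma derOp_mul_sub_mem_OpLE (hd : IsDeriv d) {n : ℕ} {P : AddMonoid.End R}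
    (hP : P ∈ OpLE d n) : derOp d * P - P * derOp d ∈ OpLE d n :=
  (OpLE_le_iff (S := (OpLE d n).comap
      (AddMonoidHom.mulLeft (derOp d) - AddMonoidHom.mulRight (derOp d)))).2 (fun a i hi => by
    show derOp d * (mulOp a * derOp d ^ i) - mulOp a * derOp d ^ i * derOp d ∈ OpLE d n
    rw [← mul_assoc, derOp_mul_mulOp hd, add_mul, mul_assoc, mul_assoc, ← pow_succ, ← pow_succ',
      add_sub_cancel_left]
    exact mulOp_mul_derPow_mem_OpLE _ hi) hP

lemma derPow_mul_sub_mem_OpLE (hd : IsDeriv d) {n : ℕ} (l : ℕ) {P : AddMonoid.End R}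
    (hP : P ∈ OpLE d n) : derOp d ^ l * P - P * derOp d ^ l ∈ OpLE d (l + n - 1) := by
  induction l with
  | zero => simp
  | succ l ih =>
    rcases Nat.eq_zero_or_pos l with rfl | hl
    · simpa using derOp_mul_sub_mem_OpLE hd hP
    have split : derOp d ^ (l + 1) * P - P * derOp d ^ (l + 1)
        = derOp d * (derOp d ^ l * P - P * derOp d ^ l)
          + (derOp d * P - P * derOp d) * derOp d ^ l := by
      simp only [pow_succ', mul_sub, sub_mul, mul_assoc]
      abel
    rw [split]
    exact add_mem (OpLE_mono (by omega) (derOp_mul_mem_OpLE hd ih))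
      (OpLE_mono (by omega) (mul_derPow_mem_OpLE l (derOp_mul_sub_mem_OpLE hd hP)))

lemma derPow_mul_mulOp_sub_mem_OpLE (hd : IsDeriv d) (b : R) (r : ℕ) :
    derOp d ^ (r + 2) * mulOp b - mulOp b * derOp d ^ (r + 2)
      - (r + 2) • (mulOp (d b) * derOp d ^ (r + 1)) ∈ OpLE d r := by
  have leibniz : ∀ (c : R) (l : ℕ), derOp d * (mulOp c * derOp d ^ l)
      = mulOp c * derOp d ^ (l + 1) + mulOp (d c) * derOp d ^ l := fun c l => by
    rw [← mul_assoc, derOp_mul_mulOp hd, add_mul, mul_assoc, ← pow_succ']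
  induction r with
  | zero =>
    have h : derOp d ^ 2 * mulOp b - mulOp b * derOp d ^ 2
        - 2 • (mulOp (d b) * derOp d ^ 1) = mulOp (d (d b)) := by
      rw [pow_two, mul_assoc, derOp_mul_mulOp hd, mul_add, ← mul_assoc, derOp_mul_mulOp hd,
        derOp_mul_mulOp hd, pow_one, two_nsmul, add_mul, mul_assoc]
      abel
    rw [zero_add, h]
    exact mulOp_mem_OpLE _ 0
  | succ r ih =>
    show derOp d ^ (r + 3) * mulOp b - mulOp b * derOp d ^ (r + 3)
      - (r + 3) • (mulOp (d b) * derOp d ^ (r + 2)) ∈ OpLE d (r + 1)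
    have split : derOp d ^ (r + 3) * mulOp b - mulOp b * derOp d ^ (r + 3)
        - (r + 3) • (mulOp (d b) * derOp d ^ (r + 2))
        = derOp d * (derOp d ^ (r + 2) * mulOp b - mulOp b * derOp d ^ (r + 2)
            - (r + 2) • (mulOp (d b) * derOp d ^ (r + 1)))
          + (r + 2) • (mulOp (d (d b)) * derOp d ^ (r + 1)) := by
      rw [mul_sub, mul_sub, mul_smul_comm, leibniz, ← mul_assoc, ← pow_succ', leibniz,
        nsmul_add, succ_nsmul]
      abel
    rw [split]
    exact add_mem (derOp_mul_mem_OpLE hd ih)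
      (nsmul_mem (mulOp_mul_derPow_mem_OpLE _ le_rfl) _)

end Commutator

section CPoly

variable {d : R →+ R} {L : AddMonoid.End R}

lemma mem_CPoly_iff {P : AddMonoid.End R} :
    P ∈ CPoly d L ↔ ∃ p : Polynomial R, (∀ k, d (p.coeff k) = 0) ∧
      P = p.sum fun i a => mulOp a * L ^ i := by
  refine exists_congr fun p => and_congr_right fun _ => ?_
  rw [Polynomial.sum_over_range p fun i => by rw [mulOp_zero, zero_mul]]

lemma add_mem_CPoly {P Q : AddMonoid.End R} (hP : P ∈ CPoly d L) (hQ : Q ∈ CPoly d L) :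
    P + Q ∈ CPoly d L := by
  obtain ⟨p, hp, rfl⟩ := mem_CPoly_iff.1 hP
  obtain ⟨q, hq, rfl⟩ := mem_CPoly_iff.1 hQ
  refine mem_CPoly_iff.2
    ⟨p + q, fun k => by rw [Polynomial.coeff_add, map_add, hp, hq, add_zero], ?_⟩
  rw [Polynomial.sum_add_index _ _ _ (fun i => by rw [mulOp_zero, zero_mul])
    fun i a b => by rw [mulOp_add, add_mul]]

lemma mulOp_mul_pow_mem_CPoly {c : R} (hc : d c = 0) (k : ℕ) : mulOp c * L ^ k ∈ CPoly d L := by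
  refine mem_CPoly_iff.2 ⟨Polynomial.monomial k c, fun i => ?_, ?_⟩
  · rw [Polynomial.coeff_monomial]
    split_ifs
    exacts [hc, map_zero d]
  · rw [Polynomial.sum_monomial_index _ _ (by rw [mulOp_zero, zero_mul])]

end CPoly

section Order

variable {d : R →+ R}

lemma exists_hasOrd_le {m : ℕ} {P : AddMonoid.End R} (hP : P ∈ OpLE d m) :
    ∃ q ≤ m, HasOrd d P q := by
  have h : ∃ j, P ∈ OpLE d j := ⟨m, hP⟩
  exact ⟨Nat.find h, Nat.find_min' h hP, Nat.find_spec h, fun k hk => Nat.find_min' h hk⟩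

lemma HasOrd.ne_zero {P : AddMonoid.End R} {n : ℕ} (h : HasOrd d P n) (hn : n ≠ 0) : P ≠ 0 := by
  rintro rfl
  exact hn (Nat.le_zero.1 (h.2 0 (zero_mem _)))

lemma HasOrd.exists_deriv_ne_zero {P : AddMonoid.End R} {n : ℕ} (h : HasOrd d P n)
    (hn : n ≠ 0) : ∃ x, d x ≠ 0 := by
  by_contra! h0
  have hder : derOp d = 0 := AddMonoidHom.ext h0
  have hle : OpLE d n ≤ OpLE d 0 := OpLE_le_iff.2 fun a i _ => by
    rcases i with _ | i
    · exact mulOp_mul_derPow_mem_OpLE a le_rfl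
    · rw [hder, zero_pow i.succ_ne_zero, mul_zero]
      exact zero_mem _
  exact hn (Nat.le_zero.1 (h.2 0 (hle h.1)))

lemma mem_OpLE_of_forall_dvd {n k : ℕ} {Q : AddMonoid.End R}
    (hQ : Q ∈ OpLE d (n * (k + 1) - 1)) (hdvd : Q ≠ 0 → ∀ q, HasOrd d Q q → n ∣ q) :
    Q ∈ OpLE d (n * k) := by
  rcases Nat.eq_zero_or_pos n with rfl | hn
  · simpa using hQ
  rcases eq_or_ne Q 0 with rfl | hQ0
  · exact zero_mem _
  obtain ⟨q, hq, hord⟩ := exists_hasOrd_le hQ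
  obtain ⟨j, rfl⟩ := hdvd hQ0 q hord
  have hnk : 0 < n * (k + 1) := Nat.mul_pos hn k.succ_pos
  have hj : j < k + 1 := Nat.lt_of_mul_lt_mul_left (by omega : n * j < n * (k + 1))
  exact OpLE_mono (Nat.mul_le_mul_left n (Nat.lt_succ_iff.1 hj)) hord.1

end Order

section CommRing

variable {A : Type} [CommRing A] {d : A →+ A}

lemma mulOp_mul_comm (a b : A) : mulOp a * mulOp b = mulOp b * mulOp a := by
  rw [← mulOp_mul, mul_comm, mulOp_mul]

lemma mul_mulOp_eq_of_deriv_eq_zero (hd : IsDeriv d) {c : A} (hc : d c = 0) {n : ℕ}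
    {P : AddMonoid.End A} (hP : P ∈ OpLE d n) : P * mulOp c = mulOp c * P := by
  have hle := (OpLE_le_iff (n := n) (S := (⊥ : AddSubgroup (AddMonoid.End A)).comap
      (AddMonoidHom.mulRight (mulOp c) - AddMonoidHom.mulLeft (mulOp c)))).2 fun a i _ => by
    show mulOp a * derOp d ^ i * mulOp c - mulOp c * (mulOp a * derOp d ^ i)
      ∈ (⊥ : AddSubgroup (AddMonoid.End A))
    rw [mul_assoc, derPow_mul_mulOp_of_deriv_eq_zero hd hc, ← mul_assoc, ← mul_assoc,
      mulOp_mul_comm, sub_self]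
    exact zero_mem _
  exact sub_eq_zero.1 (hle hP)

lemma mul_mulOp_sub_mem_OpLE (hd : IsDeriv d) {n : ℕ} (b : A) {P : AddMonoid.End A}
    (hP : P ∈ OpLE d n) : P * mulOp b - mulOp b * P ∈ OpLE d (n - 1) :=
  (OpLE_le_iff (S := (OpLE d (n - 1)).comap
      (AddMonoidHom.mulRight (mulOp b) - AddMonoidHom.mulLeft (mulOp b)))).2 (fun a i hi => by
    show mulOp a * derOp d ^ i * mulOp b - mulOp b * (mulOp a * derOp d ^ i) ∈ OpLE d (n - 1)
    rw [← mul_assoc, mulOp_mul_comm b, mul_assoc, mul_assoc, ← mul_sub]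
    have h := derPow_mul_sub_mem_OpLE hd i (mulOp_mem_OpLE (d := d) b 0)
    rw [add_zero] at h
    exact mulOp_mul_mem_OpLE a (OpLE_mono (by omega) h)) hP

lemma mul_sub_mem_OpLE (hd : IsDeriv d) {m n : ℕ} (hm : 1 ≤ m) {P Q : AddMonoid.End A}
    (hP : P ∈ OpLE d m) (hQ : Q ∈ OpLE d n) : P * Q - Q * P ∈ OpLE d (m + n - 1) :=
  (OpLE_le_iff (S := (OpLE d (m + n - 1)).comap
      (AddMonoidHom.mulLeft P - AddMonoidHom.mulRight P))).2 (fun b l hl => by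
    show P * (mulOp b * derOp d ^ l) - mulOp b * derOp d ^ l * P ∈ OpLE d (m + n - 1)
    have split : P * (mulOp b * derOp d ^ l) - mulOp b * derOp d ^ l * P
        = (P * mulOp b - mulOp b * P) * derOp d ^ l
          - mulOp b * (derOp d ^ l * P - P * derOp d ^ l) := by
      simp only [sub_mul, mul_sub, mul_assoc]
      abel
    rw [split]
    exact sub_mem (OpLE_mono (by omega) (mul_derPow_mem_OpLE l (mul_mulOp_sub_mem_OpLE hd b hP)))
      (mulOp_mul_mem_OpLE b (OpLE_mono (by omega) (derPow_mul_sub_mem_OpLE hd l hP)))) hQ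

lemma CPoly_subset_Cent (hd : IsDeriv d) {L : AddMonoid.End A} {n : ℕ} (hL : L ∈ OpLE d n) :
    CPoly d L ⊆ Cent d L := by
  intro P hP
  obtain ⟨p, hp, rfl⟩ := mem_CPoly_iff.1 hP
  rw [Polynomial.sum_def]
  refine ⟨⟨n * p.natDegree, sum_mem fun i hi => mulOp_mul_mem_OpLE _ (OpLE_mono
    (Nat.mul_le_mul_left n (Polynomial.le_natDegree_of_mem_supp i hi)) (pow_mem_OpLE hd hL i))⟩, ?_⟩
  rw [Finset.mul_sum, Finset.sum_mul]
  refine Finset.sum_congr rfl fun i _ => ?_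
  rw [← mul_assoc, mul_mulOp_eq_of_deriv_eq_zero hd (hp i) hL, mul_assoc, mul_assoc,
    (Commute.self_pow L i).eq]

end CommRing

section Domain

variable {A : Type} [CommRing A] [IsDomain A] [CharZero A] {d : A →+ A}

lemma eq_zero_of_mulOp_mul_derPow_mem_OpLE (hd : IsDeriv d) {x : A} (hx : d x ≠ 0) {r : ℕ}
    {b : A} (h : mulOp b * derOp d ^ (r + 1) ∈ OpLE d r) : b = 0 := by
  induction r generalizing b with
  | zero =>
    obtain ⟨c, hc⟩ := mem_OpLE_zero_iff.1 h
    have hbx : mulOp (b * d x) = mulOp 0 := by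
      calc mulOp (b * d x)
          = mulOp b * derOp d ^ 1 * mulOp x - mulOp x * (mulOp b * derOp d ^ 1) := by
            rw [pow_one, mul_assoc, derOp_mul_mulOp hd, mul_add, ← mul_assoc, ← mul_assoc,
              mulOp_mul_comm x b, mulOp_mul]
            abel
        _ = mulOp 0 := by rw [zero_add] at hc; rw [← hc, mulOp_mul_comm, sub_self, mulOp_zero]
    exact (mul_eq_zero.1 (mulOp_injective hbx)).resolve_right hx
  | succ r ih =>
    -- `[b ∂ ^ (r + 2), x] = b [∂ ^ (r + 2), x]` has order `≤ r` but top term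
    -- `(r + 2) b x' ∂ ^ (r + 1)`
    have hsymb : mulOp (((r + 2 : ℕ) : A) * (b * d x)) * derOp d ^ (r + 1)
        = (mulOp b * derOp d ^ (r + 2) * mulOp x - mulOp x * (mulOp b * derOp d ^ (r + 2)))
          - mulOp b * (derOp d ^ (r + 2) * mulOp x - mulOp x * derOp d ^ (r + 2)
            - (r + 2) • (mulOp (d x) * derOp d ^ (r + 1))) := by
      rw [mulOp_natCast_mul, mulOp_mul, smul_mul_assoc, mul_sub, mul_sub, mul_smul_comm,
        ← mul_assoc (mulOp x), mulOp_mul_comm x b]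
      simp only [mul_assoc]
      abel
    have hlow := sub_mem (mul_mulOp_sub_mem_OpLE hd x h)
      (mulOp_mul_mem_OpLE b (derPow_mul_mulOp_sub_mem_OpLE hd x r))
    rw [← hsymb, add_tsub_cancel_right] at hlow
    have hr : ((r + 2 : ℕ) : A) ≠ 0 := Nat.cast_ne_zero.2 (by omega)
    exact (mul_eq_zero.1 ((mul_eq_zero.1 (ih hlow)).resolve_left hr)).resolve_right hx

lemma deriv_eq_zero_of_commute (hd : IsDeriv d) {x : A} (hx : d x ≠ 0) {n : ℕ} (hn : 2 ≤ n)
    {L : AddMonoid.End A} (hL : L - derOp d ^ n ∈ OpLE d (n - 1)) {Q : AddMonoid.End A} {a : A}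
    {m : ℕ} (hQ : Q - mulOp a * derOp d ^ (m + 1) ∈ OpLE d m) (hLQ : L * Q = Q * L) :
    d a = 0 := by
  obtain ⟨n, rfl⟩ : ∃ k, n = k + 2 := ⟨n - 2, by omega⟩
  have hQm : Q ∈ OpLE d (m + 1) := by
    simpa using add_mem (OpLE_mono m.le_succ hQ) (mulOp_mul_derPow_mem_OpLE (d := d) a le_rfl)
  have hcomm : derOp d ^ (m + 1) * derOp d ^ (n + 2) = derOp d ^ (n + 2) * derOp d ^ (m + 1) :=
    pow_mul_comm _ _ _
  -- `[L, Q] = 0` minus its top term `(n + 2) a' ∂ ^ (n + m + 2)`, split into pieces of lower order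
  have split : (n + 2) • (mulOp (d a) * derOp d ^ (n + 1)) * derOp d ^ (m + 1)
      = -((derOp d ^ (n + 2) * mulOp a - mulOp a * derOp d ^ (n + 2)
            - (n + 2) • (mulOp (d a) * derOp d ^ (n + 1))) * derOp d ^ (m + 1)
          + (derOp d ^ (n + 2) * (Q - mulOp a * derOp d ^ (m + 1))
            - (Q - mulOp a * derOp d ^ (m + 1)) * derOp d ^ (n + 2))
          + ((L - derOp d ^ (n + 2)) * Q - Q * (L - derOp d ^ (n + 2))))
        + (L * Q - Q * L) := by
    simp only [sub_mul, mul_sub, mul_assoc, hcomm]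
    abel
  have hlow : (n + 2) • (mulOp (d a) * derOp d ^ (n + 1)) * derOp d ^ (m + 1)
      ∈ OpLE d (n + m + 1) := by
    rw [split, hLQ, sub_self, add_zero]
    refine neg_mem (add_mem (add_mem ?_ ?_) ?_)
    · exact OpLE_mono (by omega) (mul_derPow_mem_OpLE _ (derPow_mul_mulOp_sub_mem_OpLE hd a n))
    · exact OpLE_mono (by omega) (derPow_mul_sub_mem_OpLE hd _ hQ)
    · exact OpLE_mono (by omega) (mul_sub_mem_OpLE hd (by omega) hL hQm)
  rw [smul_mul_assoc, mul_assoc, ← pow_add, ← smul_mul_assoc, ← mulOp_natCast_mul,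
    show n + 1 + (m + 1) = n + m + 1 + 1 by omega] at hlow
  have hn : ((n + 2 : ℕ) : A) ≠ 0 := Nat.cast_ne_zero.2 (by omega)
  exact (mul_eq_zero.1 (eq_zero_of_mulOp_mul_derPow_mem_OpLE hd hx hlow)).resolve_left hn

lemma deriv_eq_zero_of_commute_mulOp (hd : IsDeriv d) {x : A} (hx : d x ≠ 0) {n : ℕ}
    (hn : 2 ≤ n) {L : AddMonoid.End A} (hL : L - derOp d ^ n ∈ OpLE d (n - 1)) {a : A}
    (h : L * mulOp a = mulOp a * L) : d a = 0 := by
  refine deriv_eq_zero_of_commute hd hx hn hL (Q := mulOp a * L) (m := n - 1) ?_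
    (by rw [← mul_assoc, h, mul_assoc])
  rw [Nat.sub_add_cancel (by omega), ← mul_sub]
  exact mulOp_mul_mem_OpLE a hL

end Domain

section Centralizer

variable {A : Type} [CommRing A] [IsDomain A] [CharZero A] {d : A →+ A} {L : AddMonoid.End A}
  {n : ℕ}

lemma exists_sub_mulOp_mul_pow_mem_Cent (hd : IsDeriv d) {x : A} (hx : d x ≠ 0) (hn : 2 ≤ n)
    (hL : L - derOp d ^ n ∈ OpLE d (n - 1)) {Q : AddMonoid.End A} (hQ : Q ∈ Cent d L) {k : ℕ}
    (hQk : Q ∈ OpLE d (n * (k + 1))) :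
    ∃ a, d a = 0 ∧ Q - mulOp a * L ^ (k + 1) ∈ Cent d L ∧
      Q - mulOp a * L ^ (k + 1) ∈ OpLE d (n * (k + 1) - 1) := by
  have hnk : n * (k + 1) - 1 + 1 = n * (k + 1) :=
    Nat.sub_add_cancel (Nat.mul_pos (by omega) k.succ_pos)
  rw [← hnk] at hQk
  obtain ⟨a, ha⟩ := exists_sub_mulOp_mul_derPow_mem_OpLE hQk
  have hda := deriv_eq_zero_of_commute hd hx hn hL ha hQ.2
  rw [hnk] at ha
  have hlow : Q - mulOp a * L ^ (k + 1) ∈ OpLE d (n * (k + 1) - 1) := by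
    have h := sub_mem ha (mulOp_mul_mem_OpLE a (pow_succ_sub_derPow_mem hd hL k))
    rwa [mul_sub, sub_sub_sub_cancel_right] at h
  refine ⟨a, hda, ⟨⟨_, hlow⟩, ?_⟩, hlow⟩
  rw [mul_sub, sub_mul, hQ.2, ← mul_assoc,
    mul_mulOp_eq_of_deriv_eq_zero hd hda (mem_OpLE_of_sub_derPow_mem hL), mul_assoc, mul_assoc,
    (Commute.self_pow L (k + 1)).eq]

theorem Cent_subset_CPoly_of_forall_dvd (hd : IsDeriv d) (hn : 2 ≤ n) (hL : MonicOrd d L n)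
    (hdvd : ∀ Q ∈ Cent d L, Q ≠ 0 → ∀ q, HasOrd d Q q → n ∣ q) : Cent d L ⊆ CPoly d L := by
  obtain ⟨x, hx⟩ := hL.1.exists_deriv_ne_zero (by omega)
  have key : ∀ k, ∀ Q ∈ Cent d L, Q ∈ OpLE d (n * k) → Q ∈ CPoly d L := by
    intro k
    induction k with
    | zero =>
      intro Q hQ hQ0
      obtain ⟨a, rfl⟩ := mem_OpLE_zero_iff.1 (by simpa using hQ0)
      have ha := deriv_eq_zero_of_commute_mulOp hd hx hn hL.2 hQ.2
      simpa using mulOp_mul_pow_mem_CPoly (L := L) ha 0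
    | succ k ih =>
      intro Q hQ hQk
      obtain ⟨a, ha, hQ'⟩ := exists_sub_mulOp_mul_pow_mem_Cent hd hx hn hL.2 hQ hQk
      have h := add_mem_CPoly (ih _ hQ'.1 (mem_OpLE_of_forall_dvd hQ'.2 (hdvd _ hQ'.1)))
        (mulOp_mul_pow_mem_CPoly ha (k + 1))
      rwa [sub_add_cancel] at h
  intro Q hQ
  obtain ⟨m, hm⟩ := hQ.1
  exact key m Q hQ (OpLE_mono (Nat.le_mul_of_pos_left m (by omega)) hm)

end Centralizer

/-- If `L` is monic of prime order `n` and its centralizer is nontrivial,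
then `L` is algebro-geometric: the gcd of the orders of nonzero elements of `Z(L)` is `1`. -/
theorem prime_order_nontrivial_is_ag {F : Type} [Field F] [CharZero F]
    (d : F →+ F) (hd : IsDeriv d) (L : AddMonoid.End F) (n : ℕ) (hp : n.Prime)
    (hL : MonicOrd d L n) (hnt : Cent d L ≠ CPoly d L) :
    ∀ e : ℕ, (∀ m : ℕ, (∃ Q ∈ Cent d L, Q ≠ 0 ∧ HasOrd d Q m) → e ∣ m) → e = 1 := by
  intro e he
  have hLn : L ∈ OpLE d n := hL.1.1
  have hen : e ∣ n := he n ⟨L, ⟨⟨n, hLn⟩, rfl⟩, hL.1.ne_zero hp.ne_zero, hL.1⟩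
  refine (hp.eq_one_or_self_of_dvd e hen).resolve_right ?_
  rintro rfl
  exact hnt ((Cent_subset_CPoly_of_forall_dvd hd hp.two_le hL
    fun Q hQ hQ0 q hq => he q ⟨Q, hQ, hQ0, hq⟩).antisymm (CPoly_subset_Cent hd hLn))
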